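/- In the stock-market problem, let 0 < ε < 1/2, and let P(X_i | x_{i−1}, x̂_i) be the reverse test-channel conditional distribution of Table II: for 1 ≤ j ≤ k, P(X_i = j−1 | x_{i−1}=j, x̂_i=0) = ε, P(X_i = j | j, 0) = (1−ε)(1−p_j−q_j)/(1−q_j), P(X_i = j+1 | j, 0) = (1−ε)p_j/(1−q_j), P(X_i = j−1 | j, 1) = 1−ε, P(X_i = j | j, 1) = ε(1−p_j−q_j)/(1−q_j), P(X_i = j+1 | j, 1) = ε p_j/(1−q_j), and P(X_i = 0 | 0, 0) = 1−p_0, P(X_i = 1 | 0, 0) = p_0 (the pair (x_{i−1}=0, x̂_i=1) has probability zero). Then with c = ( log₂((1−ε)/ε) )^{−1} > 0 and d_0(x_{i−1}, x_i) defined by d_0(j, j−1) = 1 + c log₂ ε for 1 ≤ j ≤ k, d_0(j, j) = d_0(j, j+1) = c log₂( (1−ε)(1−p_j−q_j)/(1−q_j) ) resp. c log₂( (1−ε)p_j/(1−q_j) ) for 1 ≤ j ≤ k, and d_0(0, 0) = c log₂(1−p_0), d_0(0, 1) = c log₂ p_0, the identity e(x̂_i, x_{i−1}, x_i) = −c log₂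 P(x_i | x̂_i, x_{i−1}) + d_0(x_{i−1}, x_i) holds for every triple (x̂_i, x_{i−1}, x_i) with P(x_i | x̂_i, x_{i−1}) > 0. -/

import Mathlib

/-!
Write `c = (log₂((1-ε)/ε))⁻¹`. Reading off the table row by row,
`d₀(x, x') = e(0, x, x') + c log₂ P(x' | x, 0)` for every pair (Lean's `logb 2 0 = 0` covers the
zero entries), so the identity holds for `x̂ = 0`. In a row `x ≥ 1`, flipping `x̂` from `0` to `1`
swaps `ε` and `1 - ε` in each entry: this changes `c log₂ P` by `±c log₂((1-ε)/ε) = ±1` and the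
distortion `e` by `∓1`, so `e + c log₂ P` is the same for both letters wherever `P(· | x, 1) > 0`.
-/

open Finset

/-- Transition matrix of the stock-market birth-death chain on `{0,…,k}`:
`i → i+1` with probability `p i`, `i → i-1` with probability `q i`,
`i → i` with probability `1 - p i - q i`. -/
noncomputable def stockTrans (k : ℕ) (p q : Fin (k + 1) → ℝ) (i j : Fin (k + 1)) : ℝ :=
  if (j : ℕ) = (i : ℕ) + 1 then p i
  else if (i : ℕ) = (j : ℕ) + 1 then q i
  else if i = j then 1 - p i - q i
  else 0

/-- The parameters of the stock chain: all transition probabilities strictly positive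
where defined (no up-move from state `k`, no down-move from state `0`). -/
def IsStockChain (k : ℕ) (p q : Fin (k + 1) → ℝ) : Prop :=
  (∀ i : Fin (k + 1), (i : ℕ) < k → 0 < p i) ∧ p (Fin.last k) = 0 ∧
    (∀ i : Fin (k + 1), 0 < (i : ℕ) → 0 < q i) ∧ q 0 = 0 ∧
    ∀ i : Fin (k + 1), 0 < 1 - p i - q i

/-- Per-letter distortion: an error occurs if the investor fails to predict a drop
(`x_i = x_{i-1} - 1` but `x̂_i = false`) or falsely predicts a drop
(`x_i ≥ x_{i-1}` but `x̂_i = true`). -/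
def stockDist (k : ℕ) (b : Bool) (xp xc : Fin (k + 1)) : ℝ :=
  if (b = false ∧ (xc : ℕ) + 1 = (xp : ℕ)) ∨ (b = true ∧ (xp : ℕ) ≤ (xc : ℕ)) then 1 else 0

/-- Table II: the reverse test channel `P(X_i = x_cur | X_{i-1} = x_prev, X̂_i = b)`. -/
noncomputable def tableII (k : ℕ) (p q : Fin (k + 1) → ℝ) (ε : ℝ)
    (xp : Fin (k + 1)) (b : Bool) (xc : Fin (k + 1)) : ℝ :=
  if (xp : ℕ) = 0 then
    (if b then 0
     else if (xc : ℕ) = 0 then 1 - p 0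
     else if (xc : ℕ) = 1 then p 0
     else 0)
  else if b then
    (if (xc : ℕ) + 1 = (xp : ℕ) then 1 - ε
     else if xc = xp then ε * (1 - p xp - q xp) / (1 - q xp)
     else if (xc : ℕ) = (xp : ℕ) + 1 then ε * p xp / (1 - q xp)
     else 0)
  else
    (if (xc : ℕ) + 1 = (xp : ℕ) then ε
     else if xc = xp then (1 - ε) * (1 - p xp - q xp) / (1 - q xp)
     else if (xc : ℕ) = (xp : ℕ) + 1 then (1 - ε) * p xp / (1 - q xp)
     else 0)

/-- The function `d₀(x_{i-1}, xᵢ)` of the stock-market example. -/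
noncomputable def stockD0 (k : ℕ) (p q : Fin (k + 1) → ℝ) (ε c : ℝ)
    (xp xc : Fin (k + 1)) : ℝ :=
  if (xp : ℕ) = 0 then
    (if (xc : ℕ) = 0 then c * Real.logb 2 (1 - p 0)
     else if (xc : ℕ) = 1 then c * Real.logb 2 (p 0)
     else 0)
  else if (xc : ℕ) + 1 = (xp : ℕ) then 1 + c * Real.logb 2 ε
  else if xc = xp then c * Real.logb 2 ((1 - ε) * (1 - p xp - q xp) / (1 - q xp))
  else if (xc : ℕ) = (xp : ℕ) + 1 then c * Real.logb 2 ((1 - ε) * p xp / (1 - q xp))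
  else 0

theorem Real.logb_mul_div_sub_logb_mul_div {B a e x y : ℝ} (ha : a ≠ 0) (he : e ≠ 0)
    (hx : x ≠ 0) (hy : y ≠ 0) :
    Real.logb B (a * x / y) - Real.logb B (e * x / y) = Real.logb B (a / e) := by
  rw [← Real.logb_div (by positivity) (by positivity)]
  congr 1
  field_simp

theorem stockD0_eq_stockDist_false_add (k : ℕ) (p q : Fin (k + 1) → ℝ) (ε c : ℝ)
    (xp xc : Fin (k + 1)) :
    stockD0 k p q ε c xp xc =
      stockDist k false xp xc + c * Real.logb 2 (tableII k p q ε xp false xc) := by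
  unfold stockD0 stockDist tableII
  split_ifs <;> simp_all

theorem stockDist_true_add_eq_stockDist_false_add {k : ℕ} {p q : Fin (k + 1) → ℝ} {ε c : ℝ}
    (hc : c * Real.logb 2 ((1 - ε) / ε) = 1) {xp xc : Fin (k + 1)}
    (hpos : 0 < tableII k p q ε xp true xc) :
    stockDist k true xp xc + c * Real.logb 2 (tableII k p q ε xp true xc) =
      stockDist k false xp xc + c * Real.logb 2 (tableII k p q ε xp false xc) := by
  have hε : ε ≠ 0 := fun h => by simp [h] at hc
  have h1ε : 1 - ε ≠ 0 := fun h => by simp [h] at hc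
  have not_down {y z : ℝ} (hw : 0 < ε * y / z) :
      1 + c * Real.logb 2 (ε * y / z) = c * Real.logb 2 ((1 - ε) * y / z) := by
    obtain ⟨hεy, hz⟩ := div_ne_zero_iff.mp hw.ne'
    rw [← Real.logb_mul_div_sub_logb_mul_div h1ε hε (mul_ne_zero_iff.mp hεy).2 hz] at hc
    linarith
  by_cases hxp : (xp : ℕ) = 0
  · simp [tableII, hxp] at hpos
  by_cases hdown : (xc : ℕ) + 1 = xp
  · have hxc : ¬(xp : ℕ) ≤ xc := by omega
    simp [stockDist, tableII, hxp, hdown, hxc]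
    rw [Real.logb_div h1ε hε] at hc
    linarith
  by_cases hstay : xc = xp
  · subst hstay
    simp [stockDist, tableII, hxp] at hpos ⊢
    exact not_down hpos
  by_cases hup : (xc : ℕ) = xp + 1
  · simp [stockDist, tableII, hxp, hdown, hstay, eq_true hup,
      show (xp : ℕ) ≤ xc by omega] at hpos ⊢
    exact not_down hpos
  · simp [tableII, hxp, hdown, hstay, hup] at hpos

theorem stock_distortion_identity_general
    (k : ℕ) (p q : Fin (k + 1) → ℝ)
    (ε : ℝ) (hε0 : 0 < ε) (hε : ε < 1 / 2) :
    0 < (Real.logb 2 ((1 - ε) / ε))⁻¹ ∧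
    ∀ (b : Bool) (xp xc : Fin (k + 1)), 0 < tableII k p q ε xp b xc →
      stockDist k b xp xc =
        -((Real.logb 2 ((1 - ε) / ε))⁻¹ * Real.logb 2 (tableII k p q ε xp b xc)) +
          stockD0 k p q ε (Real.logb 2 ((1 - ε) / ε))⁻¹ xp xc := by
  have hL : 0 < Real.logb 2 ((1 - ε) / ε) :=
    Real.logb_pos one_lt_two (by rw [lt_div_iff₀ hε0]; linarith)
  refine ⟨inv_pos.mpr hL, fun b xp xc hpos => ?_⟩
  rw [stockD0_eq_stockDist_false_add]
  cases b with
  | false => ring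
  | true =>
    rw [← stockDist_true_add_eq_stockDist_false_add (inv_mul_cancel₀ hL.ne') hpos]
    ring

/-- With `c = (log₂((1-ε)/ε))⁻¹ > 0` and the explicit `d₀`, the per-letter distortion
of the stock-market problem can be written as
`e(x̂ᵢ, x_{i-1}, xᵢ) = -c log₂ P(xᵢ | x̂ᵢ, x_{i-1}) + d₀(x_{i-1}, xᵢ)` at every triple
of positive conditional probability, `P(·|·,·)` being the Table II reverse channel. -/
theorem stock_distortion_identity
    (k : ℕ) (hk : 0 < k) (p q : Fin (k + 1) → ℝ) (hchain : IsStockChain k p q)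
    (ε : ℝ) (hε0 : 0 < ε) (hε : ε < 1 / 2) :
    0 < (Real.logb 2 ((1 - ε) / ε))⁻¹ ∧
    ∀ (b : Bool) (xp xc : Fin (k + 1)), 0 < tableII k p q ε xp b xc →
      stockDist k b xp xc =
        -((Real.logb 2 ((1 - ε) / ε))⁻¹ * Real.logb 2 (tableII k p q ε xp b xc)) +
          stockD0 k p q ε (Real.logb 2 ((1 - ε) / ε))⁻¹ xp xc :=
  stock_distortion_identity_general k p q ε hε0 hε
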